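/- arXiv:0904.2322 — 9 statements merged into one kernel-verified Lean document; each statement's English description precedes it below -/
import Mathlib

section
/- Let A be a unital complex Banach algebra, B a unital semi-simple commutative complex Banach algebra, and a, b nonzero complex numbers. If T : A → B satisfies σ(a·Tf + b·Tg) ⊆ σ(a·f + b·g) for all f, g ∈ A, then T(−(b/a)·g) = −(b/a)·T(g) for every g ∈ A. -/
theorem stmt1 {A B : Type*} [NormedRing A] [NormedAlgebra ℂ A] [CompleteSpace A]
    [NormedCommRing B] [NormedAlgebra ℂ B] [CompleteSpace B]
    (hsemi : ∀ x : B, spectrum ℂ x ⊆ {0} → x = 0)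
    (a b : ℂ) (ha : a ≠ 0) (hb : b ≠ 0) (T : A → B)
    (hT : ∀ f g : A, spectrum ℂ (a • T f + b • T g) ⊆ spectrum ℂ (a • f + b • g)) :
    ∀ g : A, T ((-(b / a)) • g) = (-(b / a)) • T g := by
  intro g
  have hzero : a • ((-(b / a)) • g) + b • g = 0 := by
    have hc : a * (-(b / a)) = -b := by field_simp
    rw [smul_smul, hc, neg_smul, neg_add_cancel]
  have hsub : spectrum ℂ ((0 : A)) ⊆ ({0} : Set ℂ) := by
    intro z hz
    by_contra hz0
    rw [spectrum.mem_iff] at hz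
    exact hz (by simpa using (isUnit_iff_ne_zero.mpr hz0).map (algebraMap ℂ A))
  have key : a • T ((-(b / a)) • g) + b • T g = 0 := by
    apply hsemi
    have := hT ((-(b / a)) • g) g
    rw [hzero] at this
    exact this.trans hsub
  have h1 : a • T ((-(b / a)) • g) = -(b • T g) := by
    rwa [add_eq_zero_iff_eq_neg] at key
  calc T ((-(b / a)) • g) = a⁻¹ • (a • T ((-(b / a)) • g)) := (inv_smul_smul₀ ha _).symm
    _ = a⁻¹ • (-(b • T g)) := by rw [h1]
    _ = (-(b / a)) • T g := by
        rw [smul_neg, smul_smul, ← neg_smul]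
        ring_nf
end

section
/- Let A be a unital complex Banach algebra, B a unital semi-simple commutative complex Banach algebra, and a, b nonzero complex numbers. If T : A → B satisfies σ(a·Tf + b·Tg) ⊆ σ(a·f + b·g) for all f, g ∈ A, then σ(Tf − Tg) ⊆ σ(f − g) for all f, g ∈ A. -/
lemma stmt4_aux_smul {C : Type*} [Ring C] [Algebra ℂ C] (k : ℂ) (hk : k ≠ 0) (x : C) (l : ℂ) :
    k * l ∈ spectrum ℂ (k • x) ↔ l ∈ spectrum ℂ x := by
  simpa [Units.smul_def] using
    spectrum.smul_mem_smul_iff (a := x) (s := l) (r := Units.mk0 k hk)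

theorem stmt4 {A B : Type*} [NormedRing A] [NormedAlgebra ℂ A] [CompleteSpace A]
    [NormedCommRing B] [NormedAlgebra ℂ B] [CompleteSpace B]
    (hsemi : ∀ x : B, spectrum ℂ x ⊆ {0} → x = 0)
    (a b : ℂ) (ha : a ≠ 0) (hb : b ≠ 0) (T : A → B)
    (hT : ∀ f g : A, spectrum ℂ (a • T f + b • T g) ⊆ spectrum ℂ (a • f + b • g)) :
    ∀ f g : A, spectrum ℂ (T f - T g) ⊆ spectrum ℂ (f - g) := by
  -- spectrum of 0 is contained in {0} (even without nontriviality)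
  have hzero : spectrum ℂ (0 : A) ⊆ {0} := by
    intro μ hμ
    by_contra hμ0
    exact (spectrum.notMem_iff.mpr (by
      simpa using (IsUnit.map (algebraMap ℂ A) (isUnit_iff_ne_zero.mpr hμ0)))) hμ
  -- key identity: b • T ((-a/b) • g) = - (a • T g)
  have key : ∀ g : A, a • T g + b • T ((-a / b) • g) = 0 := by
    intro g
    apply hsemi
    refine (hT g ((-a / b) • g)).trans ?_
    have h0 : a • g + b • ((-a / b) • g) = 0 := by
      match_scalars
      field_simp
      ring
    rw [h0]
    exact hzero
  intro f g l hl
  -- scale membership by the unit a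
  have h1 : a * l ∈ spectrum ℂ (a • (T f - T g)) := by
    exact (stmt4_aux_smul a ha (T f - T g) l).mpr hl
  -- rewrite a • (T f - T g) as a • T f + b • T ((-a/b) • g)
  have h2 : a • (T f - T g) = a • T f + b • T ((-a / b) • g) := by
    have := key g
    rw [smul_sub]
    linear_combination (norm := module) -this
  rw [h2] at h1
  have h3 : a * l ∈ spectrum ℂ (a • f + b • ((-a / b) • g)) := hT f ((-a / b) • g) h1
  have h4 : a • f + b • ((-a / b) • g) = a • (f - g) := by
    match_scalars <;> field_simp <;> ring
  rw [h4] at h3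
  exact (stmt4_aux_smul a ha (f - g) l).mp h3
end

section
/- Let A and B be uniform algebras on compact Hausdorff spaces X and Y, let a, b ∈ ℂ, and set p(z,w) = zw + az + bw + ab. If T : A → B is surjective and Ran_π(p(Tf, Tg)) = Ran_π(p(f,g)) for all f, g ∈ A, then the map S : A → B defined by Sf = T(f − b·1) + b·1 is surjective and satisfies Ran_π(Sf · (Sg + c·1)) = Ran_π(f · (g + c·1)) for all f, g ∈ A, where c = a − b. -/
/-- The peripheral range of a continuous function on a compact space. -/
def Ranπ {X : Type*} [TopologicalSpace X] [CompactSpace X] (f : C(X, ℂ)) : Set ℂ :=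
  {z | z ∈ Set.range f ∧ ‖z‖ = ‖f‖}

/-
Since `p(z, w) = (z + b)(w + a)`, substituting `z = u - b` and `w = v - b` gives
`p(u - b, v - b) = u (v + (a - b))`; so `Sf (Sg + c) = p(T(f - b), T(g - b))` and
`f (g + c) = p(f - b, g - b)`, and the hypothesis on `T` applies verbatim.
-/

theorem add_smul_one_mul_add_smul_one {𝕜 R : Type*} [CommSemiring 𝕜] [CommSemiring R]
    [Algebra 𝕜 R] (a b : 𝕜) (u v : R) :
    (u + b • 1) * (v + a • 1) = u * v + a • u + b • v + (a * b) • 1 := by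
  simp only [Algebra.smul_def, map_mul]
  ring

theorem mul_add_sub_smul_one {𝕜 R : Type*} [CommRing 𝕜] [CommRing R] [Algebra 𝕜 R]
    (a b : 𝕜) (u v : R) :
    u * (v + (a - b) • 1) =
      (u - b • 1) * (v - b • 1) + a • (u - b • 1) + b • (v - b • 1) + (a * b) • 1 := by
  rw [← add_smul_one_mul_add_smul_one, sub_add_cancel, sub_add_eq_add_sub, add_sub_assoc,
    ← sub_smul]

theorem stmt9_general {X Y : Type*} [TopologicalSpace X] [CompactSpace X]
    [TopologicalSpace Y] [CompactSpace Y]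
    (A : Subalgebra ℂ C(X, ℂ))
    (B : Subalgebra ℂ C(Y, ℂ))
    (a b : ℂ) (T : A → B) (hTsurj : Function.Surjective T)
    (hT : ∀ f g : A,
      Ranπ ((T f * T g + a • T f + b • T g + (a * b) • 1 : B) : C(Y, ℂ)) =
        Ranπ ((f * g + a • f + b • g + (a * b) • 1 : A) : C(X, ℂ)))
    (S : A → B) (hS : ∀ f : A, S f = T (f - b • 1) + b • 1) :
    Function.Surjective S ∧
      ∀ f g : A,
        Ranπ ((S f * (S g + (a - b) • 1) : B) : C(Y, ℂ)) =
          Ranπ ((f * (g + (a - b) • 1) : A) : C(X, ℂ)) := by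
  have hS_eq : S = (· + b • 1) ∘ T ∘ (· - b • 1) := funext hS
  refine ⟨?_, fun f g => ?_⟩
  · rw [hS_eq]
    exact (Equiv.addRight _).surjective.comp (hTsurj.comp (Equiv.subRight _).surjective)
  · rw [hS, hS, mul_add_sub_smul_one a b (T _ + _), mul_add_sub_smul_one a b f,
      add_sub_cancel_right, add_sub_cancel_right, hT]

theorem stmt9 {X Y : Type*} [TopologicalSpace X] [CompactSpace X] [T2Space X]
    [TopologicalSpace Y] [CompactSpace Y] [T2Space Y]
    (A : Subalgebra ℂ C(X, ℂ)) (hA : IsClosed (A : Set C(X, ℂ)))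
    (hAsep : ∀ x y : X, x ≠ y → ∃ f ∈ A, f x ≠ f y)
    (B : Subalgebra ℂ C(Y, ℂ)) (hB : IsClosed (B : Set C(Y, ℂ)))
    (hBsep : ∀ x y : Y, x ≠ y → ∃ f ∈ B, f x ≠ f y)
    (a b : ℂ) (T : A → B) (hTsurj : Function.Surjective T)
    (hT : ∀ f g : A,
      Ranπ ((T f * T g + a • T f + b • T g + (a * b) • 1 : B) : C(Y, ℂ)) =
        Ranπ ((f * g + a • f + b • g + (a * b) • 1 : A) : C(X, ℂ)))
    (S : A → B) (hS : ∀ f : A, S f = T (f - b • 1) + b • 1) :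
    Function.Surjective S ∧
      ∀ f g : A,
        Ranπ ((S f * (S g + (a - b) • 1) : B) : C(Y, ℂ)) =
          Ranπ ((f * (g + (a - b) • 1) : A) : C(X, ℂ)) :=
  stmt9_general A B a b T hTsurj hT S hS
end

section
/- Let A and B be uniform algebras on compact Hausdorff spaces X and Y, and let c be a nonzero complex number. Suppose S : A → B is surjective and satisfies Ran_π(Sf · (Sg + c·1)) = Ran_π(f · (g + c·1)) for all f, g ∈ A. Then S(λ·1) = λ·1 for every complex number λ. -/
/-!
Taking `g = 0`, once `S 0 = 0` is known, gives `Ranπ (S f) = Ranπ f`. For `λ ≠ -c` put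
`v = (λ + c)⁻¹ (S(λ1) + c1)`; taking `g = λ1` and using surjectivity gives `Ranπ (k v) = Ranπ k`
for every `k ∈ B`. Such a `v` must be `1`: first `Ranπ v = {1}`; for `|z| > 1` the inverse
`k = (z - v)⁻¹` exists in the Banach algebra `B`, and at a peripheral point of `k v` both
`|v| = 1`, hence `v = 1`, and `|k| = ‖k‖`. So `|z - v| ≥ |z - 1|` everywhere, which fails at a
point with `v(y) = a ≠ 1` once `z` lies far out on the ray from `1` through `a`.
The case `λ = -c` comes from `g = -c1` and `S f = 1`.
-/

section Ranπ

variable {X Y : Type*} [TopologicalSpace X] [CompactSpace X] [TopologicalSpace Y] [CompactSpace Y]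

theorem Ranπ_nonempty_iff (f : C(X, ℂ)) : (Ranπ f).Nonempty ↔ Nonempty X := by
  refine ⟨fun ⟨_, ⟨x, _⟩, _⟩ => ⟨x⟩, fun _ => ?_⟩
  obtain ⟨x, -, hx⟩ := isCompact_univ.exists_isMaxOn Set.univ_nonempty
    (continuous_norm.comp f.continuous).continuousOn
  refine ⟨f x, ⟨x, rfl⟩, le_antisymm (f.norm_coe_le_norm x) ?_⟩
  exact (f.norm_le (norm_nonneg _)).2 fun y => hx (Set.mem_univ y)

theorem Ranπ_nonempty [Nonempty X] (f : C(X, ℂ)) : (Ranπ f).Nonempty :=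
  (Ranπ_nonempty_iff f).2 ‹_›

theorem nonempty_iff_of_Ranπ_eq {f : C(X, ℂ)} {g : C(Y, ℂ)} (h : Ranπ f = Ranπ g) :
    Nonempty X ↔ Nonempty Y := by
  rw [← Ranπ_nonempty_iff f, ← Ranπ_nonempty_iff g, h]

theorem norm_eq_of_Ranπ_eq [Nonempty X] {f : C(X, ℂ)} {g : C(Y, ℂ)} (h : Ranπ f = Ranπ g) :
    ‖f‖ = ‖g‖ := by
  obtain ⟨z, hzf⟩ := Ranπ_nonempty f
  have hzg : z ∈ Ranπ g := h ▸ hzf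
  rw [← hzf.2, hzg.2]

theorem Ranπ_smul {a : ℂ} (ha : a ≠ 0) (f : C(X, ℂ)) : Ranπ (a • f) = (a * ·) '' Ranπ f := by
  ext z
  simp only [Ranπ, Set.mem_image, Set.mem_ofPred_eq, Set.mem_range, ContinuousMap.smul_apply,
    smul_eq_mul, norm_smul]
  constructor
  · rintro ⟨⟨x, rfl⟩, hx⟩
    rw [norm_mul] at hx
    exact ⟨f x, ⟨⟨x, rfl⟩, mul_left_cancel₀ (norm_ne_zero_iff.2 ha) hx⟩, rfl⟩
  · rintro ⟨_, ⟨⟨x, rfl⟩, hx⟩, rfl⟩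
    exact ⟨⟨x, rfl⟩, by rw [norm_mul, hx]⟩

theorem Ranπ_smul_eq_smul_iff {a : ℂ} (ha : a ≠ 0) {f : C(X, ℂ)} {g : C(Y, ℂ)} :
    Ranπ (a • f) = Ranπ (a • g) ↔ Ranπ f = Ranπ g := by
  rw [Ranπ_smul ha, Ranπ_smul ha]
  exact (Set.image_injective.2 (mul_right_injective₀ ha)).eq_iff

theorem Ranπ_const [Nonempty X] (a : ℂ) : Ranπ (ContinuousMap.const X a) = {a} := by
  ext z
  simp only [Ranπ, Set.mem_ofPred_eq, Set.mem_range, ContinuousMap.const_apply, exists_const,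
    Set.mem_singleton_iff]
  have hnorm : ‖ContinuousMap.const X a‖ = ‖a‖ :=
    ((ContinuousMap.const X a).norm_le (norm_nonneg a)).2 (fun _ => le_rfl) |>.antisymm
      ((ContinuousMap.const X a).norm_coe_le_norm (Classical.arbitrary X))
  exact ⟨fun ⟨h, _⟩ => h.symm, fun h => ⟨h.symm, by rw [h, hnorm]⟩⟩

theorem Ranπ_eq_singleton_zero_iff [Nonempty X] {f : C(X, ℂ)} : Ranπ f = {0} ↔ f = 0 := by
  refine ⟨fun h => ?_, fun h => h ▸ Ranπ_const (0 : ℂ)⟩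
  obtain ⟨z, hz⟩ := Ranπ_nonempty f
  have hz0 : z = 0 := by rwa [h] at hz
  rw [← norm_eq_zero, ← hz.2, hz0, norm_zero]

theorem norm_eq_of_Ranπ_eq_singleton {f : C(X, ℂ)} {a : ℂ} (h : Ranπ f = {a}) : ‖f‖ = ‖a‖ :=
  ((h ▸ Set.mem_singleton a : a ∈ Ranπ f).2).symm

end Ranπ

theorem Complex.exists_one_lt_norm_and_norm_sub_lt {a : ℂ} (ha : a ≠ 1) :
    ∃ z : ℂ, 1 < ‖z‖ ∧ ‖z - a‖ < ‖z - 1‖ := by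
  set t := ‖a - 1‖ with ht_def
  have ht : 0 < t := norm_pos_iff.2 (sub_ne_zero.2 ha)
  refine ⟨a + ((2 / t : ℝ) : ℂ) * (a - 1), ?_⟩
  have hza : ‖a + ((2 / t : ℝ) : ℂ) * (a - 1) - a‖ = 2 := by
    rw [add_sub_cancel_left, norm_mul, Complex.norm_real, Real.norm_of_nonneg (by positivity),
      ← ht_def]
    field_simp
  have hz1 : ‖a + ((2 / t : ℝ) : ℂ) * (a - 1) - 1‖ = t + 2 := by
    rw [show a + ((2 / t : ℝ) : ℂ) * (a - 1) - 1 = ((1 + 2 / t : ℝ) : ℂ) * (a - 1) by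
      push_cast; ring, norm_mul, Complex.norm_real, Real.norm_of_nonneg (by positivity), ← ht_def]
    field_simp
  have := norm_sub_le (a + ((2 / t : ℝ) : ℂ) * (a - 1)) 1
  rw [hz1, norm_one] at this
  constructor <;> linarith

section UniformAlgebra

variable {Y : Type*} [TopologicalSpace Y] [CompactSpace Y] [Nonempty Y]

theorem exists_apply_eq_one_of_Ranπ_mul_eq {k v : C(Y, ℂ)} (hv : Ranπ v = {1})
    (hk : ∀ y, k y ≠ 0) (h : Ranπ (k * v) = Ranπ k) : ∃ y, v y = 1 ∧ ‖k y‖ = ‖k‖ := by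
  obtain ⟨_, ⟨y, rfl⟩, hy⟩ := Ranπ_nonempty (k * v)
  have hv1 : ‖v‖ = 1 := by rw [norm_eq_of_Ranπ_eq_singleton hv, norm_one]
  have hvy : ‖v y‖ ≤ 1 := hv1 ▸ v.norm_coe_le_norm y
  have hky : ‖k y‖ ≤ ‖k‖ := k.norm_coe_le_norm y
  have hprod : ‖k y‖ * ‖v y‖ = ‖k‖ := by
    rw [← norm_mul, ← ContinuousMap.mul_apply, hy, norm_eq_of_Ranπ_eq h]
  have hkpos : 0 < ‖k y‖ := norm_pos_iff.2 (hk y)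
  have hvy1 : ‖v y‖ = 1 := by nlinarith
  refine ⟨y, ?_, by rw [← hprod, hvy1, mul_one]⟩
  have : v y ∈ Ranπ v := ⟨⟨y, rfl⟩, by rw [hvy1, hv1]⟩
  rwa [hv] at this

variable {B : Subalgebra ℂ C(Y, ℂ)}

theorem Subalgebra.exists_mem_mul_sub_eq_one (hB : IsClosed (B : Set C(Y, ℂ))) {v : C(Y, ℂ)}
    (hv : v ∈ B) {z : ℂ} (hz : ‖v‖ < ‖z‖) : ∃ k ∈ B, ∀ y, k y * (z - v y) = 1 := by
  have : CompleteSpace B := hB.completeSpace_coe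
  have : NormOneClass B := ⟨norm_one (α := C(Y, ℂ))⟩
  have hzσ : z ∉ spectrum ℂ (⟨v, hv⟩ : B) := fun hmem =>
    (spectrum.norm_le_norm_of_mem hmem).not_gt hz
  obtain ⟨w, hw⟩ := spectrum.notMem_iff.1 hzσ
  refine ⟨(↑w⁻¹ : B), (↑w⁻¹ : B).2, fun y => ?_⟩
  have := congrArg (fun b : B => (b : C(Y, ℂ)) y) (hw ▸ w.inv_mul)
  simpa using this

theorem norm_sub_one_le_norm_sub_apply_of_Ranπ_mul_eq (hB : IsClosed (B : Set C(Y, ℂ)))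
    {v : C(Y, ℂ)} (hv : v ∈ B) (h : ∀ k ∈ B, Ranπ (k * v) = Ranπ k) {z : ℂ} (hz : 1 < ‖z‖)
    (y : Y) : ‖z - 1‖ ≤ ‖z - v y‖ := by
  have hv1 : Ranπ v = {1} := by
    simpa only [one_mul] using (h 1 B.one_mem).trans (Ranπ_const 1)
  obtain ⟨k, hkB, hk⟩ := B.exists_mem_mul_sub_eq_one hB hv (z := z)
    (by rwa [norm_eq_of_Ranπ_eq_singleton hv1, norm_one])
  have hk0 : ∀ y, k y ≠ 0 := fun y h0 => by simpa [h0] using hk y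
  obtain ⟨y₁, hvy₁, hky₁⟩ := exists_apply_eq_one_of_Ranπ_mul_eq hv1 hk0 (h k hkB)
  have hy₁ : ‖k y₁‖ * ‖z - 1‖ = 1 := by rw [← hvy₁, ← norm_mul, hk, norm_one]
  have hy : ‖k y‖ * ‖z - v y‖ = 1 := by rw [← norm_mul, hk, norm_one]
  have hle : ‖k y‖ ≤ ‖k y₁‖ := hky₁ ▸ k.norm_coe_le_norm y
  calc ‖z - 1‖ = ‖z - 1‖ * (‖k y‖ * ‖z - v y‖) := by rw [hy, mul_one]
    _ ≤ ‖z - 1‖ * (‖k y₁‖ * ‖z - v y‖) := by gcongr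
    _ = ‖z - v y‖ := by linear_combination ‖z - v y‖ * hy₁

theorem eq_one_of_Ranπ_mul_eq (hB : IsClosed (B : Set C(Y, ℂ))) {v : C(Y, ℂ)} (hv : v ∈ B)
    (h : ∀ k ∈ B, Ranπ (k * v) = Ranπ k) : v = 1 :=
  ContinuousMap.ext fun y => by_contra fun hy => by
    obtain ⟨z, hz, hza⟩ := Complex.exists_one_lt_norm_and_norm_sub_lt hy
    exact (norm_sub_one_le_norm_sub_apply_of_Ranπ_mul_eq hB hv h hz y).not_gt hza

end UniformAlgebra

section PeripheralRangePreserving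

variable {X Y : Type*} [TopologicalSpace X] [CompactSpace X] [TopologicalSpace Y] [CompactSpace Y]
  {A : Subalgebra ℂ C(X, ℂ)} {B : Subalgebra ℂ C(Y, ℂ)}

def PreservesRanπMulAdd (c : ℂ) (S : A → B) : Prop :=
  ∀ f g : A, Ranπ ((S f * (S g + c • 1) : B) : C(Y, ℂ)) = Ranπ ((f * (g + c • 1) : A) : C(X, ℂ))

namespace PreservesRanπMulAdd

variable {c : ℂ} {S : A → B}

theorem nonempty_iff (hS : PreservesRanπMulAdd c S) : Nonempty X ↔ Nonempty Y :=
  (nonempty_iff_of_Ranπ_eq (hS 1 1)).symm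

theorem map_zero [Nonempty X] [Nonempty Y] (hS : PreservesRanπMulAdd c S)
    (hsurj : Function.Surjective S) : S 0 = 0 := by
  obtain ⟨g, hg⟩ := hsurj (1 - c • 1)
  have h := hS 0 g
  rw [hg, sub_add_cancel, mul_one, zero_mul] at h
  exact Subtype.ext (Ranπ_eq_singleton_zero_iff.1 (h.trans (Ranπ_eq_singleton_zero_iff.2 rfl)))

theorem Ranπ_map (hc : c ≠ 0) (hS : PreservesRanπMulAdd c S) (h0 : S 0 = 0) (f : A) :
    Ranπ (S f : C(Y, ℂ)) = Ranπ (f : C(X, ℂ)) := by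
  have h := hS f 0
  rw [h0, zero_add, zero_add, mul_smul_comm, mul_one, mul_smul_comm, mul_one] at h
  exact (Ranπ_smul_eq_smul_iff hc).1 h

theorem map_neg_smul_one [Nonempty X] [Nonempty Y] (hS : PreservesRanπMulAdd c S)
    (hsurj : Function.Surjective S) : S (-c • 1) = -c • 1 := by
  obtain ⟨f, hf⟩ := hsurj 1
  have h := hS f (-c • 1)
  rw [hf, one_mul, neg_smul, neg_add_cancel, mul_zero] at h
  have h0 := Ranπ_eq_singleton_zero_iff.1 (h.trans (Ranπ_eq_singleton_zero_iff.2 rfl))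
  rw [neg_smul, neg_smul]
  exact eq_neg_of_add_eq_zero_left (Subtype.ext h0)

theorem Ranπ_mul_smul_map_add_smul_one [Nonempty X] [Nonempty Y] (hc : c ≠ 0)
    (hS : PreservesRanπMulAdd c S) (hsurj : Function.Surjective S) {lam : ℂ} (hlc : lam + c ≠ 0) :
    ∀ k ∈ B, Ranπ (k * ((lam + c)⁻¹ • ((S (lam • 1) + c • 1 : B) : C(Y, ℂ)))) = Ranπ k := by
  intro k hk
  obtain ⟨f, hf⟩ := hsurj ⟨k, hk⟩
  rw [show k = S f by rw [hf], ← Ranπ_smul_eq_smul_iff hlc, mul_smul_comm, smul_inv_smul₀ hlc]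
  calc Ranπ ((S f * (S (lam • 1) + c • 1) : B) : C(Y, ℂ))
      = Ranπ ((f * (lam • 1 + c • 1) : A) : C(X, ℂ)) := hS f (lam • 1)
    _ = Ranπ ((lam + c) • (f : C(X, ℂ))) := by rw [← add_smul, mul_smul_comm, mul_one]; rfl
    _ = Ranπ ((lam + c) • (S f : C(Y, ℂ))) :=
      ((Ranπ_smul_eq_smul_iff hlc).2 (hS.Ranπ_map hc (hS.map_zero hsurj) f)).symm

end PreservesRanπMulAdd

end PeripheralRangePreserving

theorem stmt11_general {X Y : Type*} [TopologicalSpace X] [CompactSpace X]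
    [TopologicalSpace Y] [CompactSpace Y]
    (A : Subalgebra ℂ C(X, ℂ))
    (B : Subalgebra ℂ C(Y, ℂ)) (hB : IsClosed (B : Set C(Y, ℂ)))
    (c : ℂ) (hc : c ≠ 0) (S : A → B)
    (hSeq : ∀ f g : A,
      Ranπ ((S f * (S g + c • 1) : B) : C(Y, ℂ)) = Ranπ ((f * (g + c • 1) : A) : C(X, ℂ)))
    (hSsurj : Function.Surjective S) :
    ∀ lam : ℂ, S (lam • 1) = lam • 1 := by
  intro lam
  rcases isEmpty_or_nonempty Y with hY | hY
  · exact Subsingleton.elim _ _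
  have : Nonempty X := (PreservesRanπMulAdd.nonempty_iff hSeq).2 hY
  by_cases hlc : lam + c = 0
  · obtain rfl : lam = -c := eq_neg_of_add_eq_zero_left hlc
    exact PreservesRanπMulAdd.map_neg_smul_one hSeq hSsurj
  have hv := eq_one_of_Ranπ_mul_eq hB (B.smul_mem (S (lam • 1) + c • 1).2 (lam + c)⁻¹)
    (PreservesRanπMulAdd.Ranπ_mul_smul_map_add_smul_one hc hSeq hSsurj hlc)
  rw [inv_smul_eq_iff₀ hlc, add_smul] at hv
  exact Subtype.ext (add_right_cancel hv)

theorem stmt11 {X Y : Type*} [TopologicalSpace X] [CompactSpace X] [T2Space X]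
    [TopologicalSpace Y] [CompactSpace Y] [T2Space Y]
    (A : Subalgebra ℂ C(X, ℂ)) (hA : IsClosed (A : Set C(X, ℂ)))
    (hAsep : ∀ x y : X, x ≠ y → ∃ f ∈ A, f x ≠ f y)
    (B : Subalgebra ℂ C(Y, ℂ)) (hB : IsClosed (B : Set C(Y, ℂ)))
    (hBsep : ∀ x y : Y, x ≠ y → ∃ f ∈ B, f x ≠ f y)
    (c : ℂ) (hc : c ≠ 0) (S : A → B)
    (hSeq : ∀ f g : A,
      Ranπ ((S f * (S g + c • 1) : B) : C(Y, ℂ)) = Ranπ ((f * (g + c • 1) : A) : C(X, ℂ)))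
    (hSsurj : Function.Surjective S) :
    ∀ lam : ℂ, S (lam • 1) = lam • 1 :=
  stmt11_general A B hB c hc S hSeq hSsurj
end

section
/- Let A and B be uniform algebras on compact Hausdorff spaces X and Y, and c ≠ 0. Suppose S : A → B is a bijection satisfying Ran_π(Sf · (Sg + c·1)) = Ran_π(f · (g + c·1)) for all f, g ∈ A and fixing constants. Then S maps the set of peaking functions of A bijectively onto the set of peaking functions of B. -/
theorem Ranπ_smul_s13 {X : Type*} [TopologicalSpace X] [CompactSpace X] {c : ℂ} (hc : c ≠ 0)
    (h : C(X, ℂ)) : Ranπ (c • h) = (c * ·) '' Ranπ h := by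
  ext z
  simp only [Ranπ, Set.mem_ofPred_eq, Set.mem_image, Set.mem_range, ContinuousMap.smul_apply,
    smul_eq_mul, norm_smul]
  have hc' : ‖c‖ ≠ 0 := norm_ne_zero_iff.mpr hc
  constructor
  · rintro ⟨⟨x, rfl⟩, habs⟩
    rw [norm_mul] at habs
    exact ⟨h x, ⟨⟨x, rfl⟩, mul_left_cancel₀ hc' habs⟩, rfl⟩
  · rintro ⟨_, ⟨⟨x, rfl⟩, habs⟩, rfl⟩
    exact ⟨⟨x, rfl⟩, by rw [norm_mul, habs]⟩

theorem Ranπ_smul_inj {X Y : Type*} [TopologicalSpace X] [CompactSpace X] [TopologicalSpace Y]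
    [CompactSpace Y] {c : ℂ} (hc : c ≠ 0) {f : C(X, ℂ)} {g : C(Y, ℂ)} :
    Ranπ (c • f) = Ranπ (c • g) ↔ Ranπ f = Ranπ g := by
  rw [Ranπ_smul_s13 hc, Ranπ_smul_s13 hc]
  exact (Set.image_injective.mpr (mul_right_injective₀ hc)).eq_iff

theorem Ranπ_apply_eq_of_Ranπ_mul_add_smul_one_eq {X Y : Type*} [TopologicalSpace X]
    [CompactSpace X] [TopologicalSpace Y] [CompactSpace Y] {A : Subalgebra ℂ C(X, ℂ)}
    {B : Subalgebra ℂ C(Y, ℂ)} {c : ℂ} (hc : c ≠ 0) {S : A → B} (hS0 : S 0 = 0)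
    (hSeq : ∀ f g : A,
      Ranπ ((S f * (S g + c • 1) : B) : C(Y, ℂ)) = Ranπ ((f * (g + c • 1) : A) : C(X, ℂ)))
    (f : A) : Ranπ (S f : C(Y, ℂ)) = Ranπ (f : C(X, ℂ)) := by
  have h := hSeq f 0
  rwa [hS0, zero_add, zero_add, mul_smul_one, mul_smul_one, Subalgebra.coe_smul,
    Subalgebra.coe_smul, Ranπ_smul_inj hc] at h

theorem stmt13_general {X Y : Type*} [TopologicalSpace X] [CompactSpace X]
    [TopologicalSpace Y] [CompactSpace Y]
    (A : Subalgebra ℂ C(X, ℂ))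
    (B : Subalgebra ℂ C(Y, ℂ))
    (c : ℂ) (hc : c ≠ 0) (S : A → B)
    (hSeq : ∀ f g : A,
      Ranπ ((S f * (S g + c • 1) : B) : C(Y, ℂ)) = Ranπ ((f * (g + c • 1) : A) : C(X, ℂ)))
    (hSbij : Function.Bijective S)
    (hSconst : ∀ lam : ℂ, S (lam • 1) = lam • 1) :
    Set.BijOn S {f : A | Ranπ ((f : C(X, ℂ))) = {1}}
      {g : B | Ranπ ((g : C(Y, ℂ))) = {1}} := by
  have hS0 : S 0 = 0 := by simpa using hSconst 0
  have hpeak : {f : A | Ranπ (f : C(X, ℂ)) = {1}} =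
      S ⁻¹' {g : B | Ranπ (g : C(Y, ℂ)) = {1}} := by
    ext f
    simp only [Set.mem_ofPred_eq, Set.mem_preimage,
      Ranπ_apply_eq_of_Ranπ_mul_add_smul_one_eq hc hS0 hSeq f]
  rw [hpeak]
  exact hSbij.bijOn_preimage

theorem stmt13 {X Y : Type*} [TopologicalSpace X] [CompactSpace X] [T2Space X]
    [TopologicalSpace Y] [CompactSpace Y] [T2Space Y]
    (A : Subalgebra ℂ C(X, ℂ)) (hA : IsClosed (A : Set C(X, ℂ)))
    (hAsep : ∀ x y : X, x ≠ y → ∃ f ∈ A, f x ≠ f y)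
    (B : Subalgebra ℂ C(Y, ℂ)) (hB : IsClosed (B : Set C(Y, ℂ)))
    (hBsep : ∀ x y : Y, x ≠ y → ∃ f ∈ B, f x ≠ f y)
    (c : ℂ) (hc : c ≠ 0) (S : A → B)
    (hSeq : ∀ f g : A,
      Ranπ ((S f * (S g + c • 1) : B) : C(Y, ℂ)) = Ranπ ((f * (g + c • 1) : A) : C(X, ℂ)))
    (hSbij : Function.Bijective S)
    (hSconst : ∀ lam : ℂ, S (lam • 1) = lam • 1) :
    Set.BijOn S {f : A | Ranπ ((f : C(X, ℂ))) = {1}}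
      {g : B | Ranπ ((g : C(Y, ℂ))) = {1}} :=
  stmt13_general A B c hc S hSeq hSbij hSconst
end

section
/- Let A and B be uniform algebras. For peaking functions f, g of A, the inclusion L_f ⊆ L_g holds if and only if for every peaking function u of A with 1 ∈ Ran_π(fu), one has 1 ∈ Ran_π(ug). -/
/-
The forward direction is immediate: all functions involved have sup norm 1, so `1` lies in the
peripheral range of a product of two peaking functions exactly when their peak sets meet.

For the converse, let `x₀ ∈ L_f` with `g x₀ ≠ 1` and let `k ∈ A` be `1` at `x₀` and `0` on `L_g`.
Let `x₁` maximise `Re k` over `L_f`, with maximum `m ≥ 1`. The series `h = ∑ 2^-(n+1) v^(M n)`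
of powers of `v = (1 + f) / 2`, with `M n` so large that `|v|^(M n) ≤ 1/2` where `Re k - m` is at
least of order `2^-n`, is `1` on `L_f` and, off `L_f`, small enough that `u = h * exp (t (k - m))`
still has sup norm `1` for small `t > 0`. Then `|u x₁| = 1` while `|u| < 1` on `L_g`, so
`(1 + u / u x₁) / 2` is a peaking function whose peak set contains `x₁ ∈ L_f` and misses `L_g`.
-/

lemma one_sub_mul_exp_le_one (s : ℝ) : (1 - s) * Real.exp s ≤ 1 := by
  calc (1 - s) * Real.exp s ≤ Real.exp (-s) * Real.exp s := by
        gcongr; exact Real.one_sub_le_exp_neg s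
    _ = 1 := by rw [← Real.exp_add, neg_add_cancel, Real.exp_zero]

lemma summable_half_pow_succ : Summable fun n : ℕ ↦ (1 / 2 : ℝ) ^ (n + 1) := by
  simpa only [pow_succ] using summable_geometric_two.mul_right (1 / 2)

lemma tsum_half_pow_succ : ∑' n : ℕ, (1 / 2 : ℝ) ^ (n + 1) = 1 := by
  simp only [pow_succ, tsum_mul_right, tsum_geometric_two]
  norm_num

lemma tsum_half_pow_succ_mul_le {a : ℕ → ℝ} (ha₀ : ∀ n, 0 ≤ a n) (ha₁ : ∀ n, a n ≤ 1) (k : ℕ) :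
    ∑' n, (1 / 2 : ℝ) ^ (n + 1) * a n ≤ 1 - (1 / 2) ^ (k + 1) * (1 - a k) := by
  have hdefect : ∀ n, 0 ≤ (1 / 2 : ℝ) ^ (n + 1) * (1 - a n) :=
    fun n ↦ mul_nonneg (by positivity) (sub_nonneg.2 (ha₁ n))
  have hsum : Summable fun n ↦ (1 / 2 : ℝ) ^ (n + 1) * (1 - a n) :=
    summable_half_pow_succ.of_nonneg_of_le hdefect
      fun n ↦ mul_le_of_le_one_right (by positivity) (by linarith [ha₀ n])
  calc ∑' n, (1 / 2 : ℝ) ^ (n + 1) * a n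
      = ∑' n, ((1 / 2 : ℝ) ^ (n + 1) - (1 / 2) ^ (n + 1) * (1 - a n)) := by
        congr 1; ext n; ring
    _ = 1 - ∑' n, (1 / 2 : ℝ) ^ (n + 1) * (1 - a n) := by
        rw [summable_half_pow_succ.tsum_sub hsum, tsum_half_pow_succ]
    _ ≤ 1 - (1 / 2) ^ (k + 1) * (1 - a k) := by
        gcongr; exact hsum.le_tsum k fun n _ ↦ hdefect n

lemma IsCompact.exists_forall_pow_le {X : Type*} [TopologicalSpace X] {K : Set X}
    (hK : IsCompact K) {φ : X → ℝ} (hφ : ContinuousOn φ K) (h₀ : ∀ x ∈ K, 0 ≤ φ x)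
    (h₁ : ∀ x ∈ K, φ x < 1) {ε : ℝ} (hε : 0 < ε) : ∃ M : ℕ, ∀ x ∈ K, φ x ^ M ≤ ε := by
  rcases K.eq_empty_or_nonempty with rfl | hne
  · exact ⟨0, by simp⟩
  obtain ⟨x₀, hx₀, hmax⟩ := hK.exists_isMaxOn hne hφ
  obtain ⟨M, hM⟩ := exists_pow_lt_of_lt_one hε (h₁ x₀ hx₀)
  exact ⟨M, fun x hx ↦ (pow_le_pow_left₀ (h₀ x hx) (hmax hx) M).trans hM.le⟩

lemma norm_half_mul_one_add_le_one {w : ℂ} (hw : ‖w‖ ≤ 1) : ‖2⁻¹ * (1 + w)‖ ≤ 1 := by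
  rw [norm_mul, norm_inv, Complex.norm_two]
  linarith [norm_add_le (1 : ℂ) w, norm_one (α := ℂ)]

lemma eq_one_of_norm_half_mul_one_add_eq_one {w : ℂ} (hw : ‖w‖ ≤ 1)
    (h : ‖2⁻¹ * (1 + w)‖ = 1) : w = 1 := by
  rw [norm_mul, norm_inv, Complex.norm_two] at h
  have hw1 : ‖w‖ = 1 := le_antisymm hw (by linarith [norm_add_le (1 : ℂ) w, norm_one (α := ℂ)])
  have hray : SameRay ℝ (1 : ℂ) w := sameRay_iff_norm_add.2 (by rw [hw1, norm_one]; linarith)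
  exact (hray.eq_of_norm_eq (by rw [hw1, norm_one])).symm

section Peaking

variable {X : Type*} [TopologicalSpace X] [CompactSpace X]

lemma ranπ_eq_singleton_one_iff {f : C(X, ℂ)} :
    Ranπ f = {1} ↔ (∀ x, ‖f x‖ ≤ 1) ∧ (∃ x, f x = 1) ∧ ∀ x, ‖f x‖ = 1 → f x = 1 := by
  constructor
  · intro hf
    obtain ⟨⟨x₁, hx₁⟩, hnorm⟩ : (1 : ℂ) ∈ Ranπ f := hf ▸ rfl
    rw [norm_one] at hnorm
    refine ⟨fun x ↦ hnorm ▸ f.norm_coe_le_norm x, ⟨x₁, hx₁⟩, fun x hx ↦ ?_⟩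
    have : f x ∈ Ranπ f := ⟨⟨x, rfl⟩, hx.trans hnorm⟩
    rwa [hf] at this
  · rintro ⟨hle, ⟨x₁, hx₁⟩, heq⟩
    have hnorm : ‖f‖ = 1 :=
      le_antisymm ((f.norm_le zero_le_one).2 hle) (by simpa [hx₁] using f.norm_coe_le_norm x₁)
    ext z
    refine ⟨fun ⟨⟨x, hx⟩, hz⟩ ↦ hx ▸ heq x (hx ▸ hz.trans hnorm), ?_⟩
    rintro rfl
    exact ⟨⟨x₁, hx₁⟩, by rw [hnorm, norm_one]⟩

lemma norm_mul_apply_eq_one_iff {f u : C(X, ℂ)} (hf : Ranπ f = {1}) (hu : Ranπ u = {1})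
    (x : X) : ‖f x * u x‖ = 1 ↔ f x = 1 ∧ u x = 1 := by
  refine ⟨fun h ↦ ?_, fun ⟨hfx, hux⟩ ↦ by rw [hfx, hux, one_mul, norm_one]⟩
  obtain ⟨hf₁, -, hf₂⟩ := ranπ_eq_singleton_one_iff.1 hf
  obtain ⟨hu₁, -, hu₂⟩ := ranπ_eq_singleton_one_iff.1 hu
  rw [norm_mul] at h
  have hfx : ‖f x‖ * ‖u x‖ ≤ ‖f x‖ := mul_le_of_le_one_right (norm_nonneg _) (hu₁ x)
  have hux : ‖f x‖ * ‖u x‖ ≤ ‖u x‖ := mul_le_of_le_one_left (norm_nonneg _) (hf₁ x)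
  exact ⟨hf₂ x (by linarith [hf₁ x]), hu₂ x (by linarith [hu₁ x])⟩

lemma one_mem_ranπ_mul_iff {f u : C(X, ℂ)} (hf : Ranπ f = {1}) (hu : Ranπ u = {1}) :
    (1 : ℂ) ∈ Ranπ (f * u) ↔ ∃ x, f x = 1 ∧ u x = 1 := by
  constructor
  · rintro ⟨⟨x, hx⟩, -⟩
    refine ⟨x, (norm_mul_apply_eq_one_iff hf hu x).1 ?_⟩
    rw [← ContinuousMap.mul_apply, hx, norm_one]
  · rintro ⟨x, hx⟩
    suffices Ranπ (f * u) = {1} by rw [this]; rfl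
    obtain ⟨hf₁, -, -⟩ := ranπ_eq_singleton_one_iff.1 hf
    obtain ⟨hu₁, -, -⟩ := ranπ_eq_singleton_one_iff.1 hu
    refine ranπ_eq_singleton_one_iff.2 ⟨fun y ↦ ?_, ⟨x, ?_⟩, fun y hy ↦ ?_⟩
    · rw [ContinuousMap.mul_apply, norm_mul]
      exact mul_le_one₀ (hf₁ y) (norm_nonneg _) (hu₁ y)
    · rw [ContinuousMap.mul_apply, hx.1, hx.2, one_mul]
    · obtain ⟨hfy, huy⟩ := (norm_mul_apply_eq_one_iff hf hu y).1 hy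
      rw [ContinuousMap.mul_apply, hfy, huy, one_mul]

lemma exists_ranπ_eq_singleton_one_of_norm_le_one (A : Subalgebra ℂ C(X, ℂ)) {u : C(X, ℂ)}
    (huA : u ∈ A) (hu : ∀ x, ‖u x‖ ≤ 1) {x₁ : X} (hx₁ : ‖u x₁‖ = 1) :
    ∃ U ∈ A, Ranπ U = {1} ∧ U x₁ = 1 ∧ ∀ y, U y = 1 → ‖u y‖ = 1 := by
  have hux₁ : u x₁ ≠ 0 := norm_ne_zero_iff.1 (by rw [hx₁]; exact one_ne_zero)
  have hnorm : ∀ y, ‖(u x₁)⁻¹ * u y‖ ≤ 1 := fun y ↦ by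
    rw [norm_mul, norm_inv, hx₁, inv_one, one_mul]; exact hu y
  set U : C(X, ℂ) := (2⁻¹ : ℂ) • (1 + (u x₁)⁻¹ • u)
  have hU : ∀ y, U y = 2⁻¹ * (1 + (u x₁)⁻¹ * u y) := fun y ↦ rfl
  have hUx₁ : U x₁ = 1 := by rw [hU, inv_mul_cancel₀ hux₁]; norm_num
  have hU_eq : ∀ y, ‖U y‖ = 1 → (u x₁)⁻¹ * u y = 1 := fun y hy ↦
    eq_one_of_norm_half_mul_one_add_eq_one (hnorm y) (hU y ▸ hy)
  refine ⟨U, A.smul_mem (A.add_mem A.one_mem (A.smul_mem huA _)) _,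
    ranπ_eq_singleton_one_iff.2 ⟨fun y ↦ hU y ▸ norm_half_mul_one_add_le_one (hnorm y),
      ⟨x₁, hUx₁⟩, fun y hy ↦ ?_⟩, hUx₁, fun y hy ↦ ?_⟩
  · rw [hU, hU_eq y hy]; norm_num
  · have := hU_eq y (by rw [hy, norm_one])
    rw [inv_mul_eq_one₀ hux₁] at this
    rw [← this, hx₁]

lemma NormedSpace.exp_continuousMap_apply (w : C(X, ℂ)) (x : X) :
    NormedSpace.exp w x = Complex.exp (w x) := by
  rw [Complex.exp_eq_exp_ℂ]
  exact NormedSpace.map_exp (ContinuousMap.evalAlgHom ℂ ℂ x) (continuous_eval_const x) w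

lemma exists_mem_norm_mul_exp_le_one (A : Subalgebra ℂ C(X, ℂ)) (hA : IsClosed (A : Set C(X, ℂ)))
    {v : C(X, ℂ)} (hvA : v ∈ A) (hv : ∀ x, ‖v x‖ ≤ 1) {ρ : X → ℝ} (hρ : Continuous ρ)
    (hρv : ∀ x, ‖v x‖ = 1 → ρ x ≤ 0) (hρ_le : ∀ x, ρ x ≤ 1 / 4) :
    ∃ h ∈ A, (∀ x, v x = 1 → h x = 1) ∧ (∀ x, ‖h x‖ ≤ 1) ∧
      ∀ x, ‖h x‖ * Real.exp (ρ x) ≤ 1 := by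
  have hM (n : ℕ) : ∃ M : ℕ, ∀ x ∈ {x | (1 / 2 : ℝ) ^ (n + 3) ≤ ρ x}, ‖v x‖ ^ M ≤ 1 / 2 := by
    refine (isClosed_le continuous_const hρ).isCompact.exists_forall_pow_le
      (continuous_norm.comp v.continuous).continuousOn (fun x _ ↦ norm_nonneg _)
      (fun x hx ↦ (hv x).lt_of_ne fun h ↦ ?_) (by norm_num)
    have : (0 : ℝ) < (1 / 2) ^ (n + 3) := by positivity
    linarith [hρv x h, show (1 / 2 : ℝ) ^ (n + 3) ≤ ρ x from hx]
  choose M hM using hM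
  set G : ℕ → C(X, ℂ) := fun n ↦ (1 / 2 : ℂ) ^ (n + 1) • v ^ M n
  have hG (n : ℕ) (x : X) : ‖G n x‖ = (1 / 2 : ℝ) ^ (n + 1) * ‖v x‖ ^ M n := by
    simp [G, norm_pow]
  have hG_le (n : ℕ) (x : X) : ‖G n x‖ ≤ (1 / 2 : ℝ) ^ (n + 1) := by
    rw [hG]; exact mul_le_of_le_one_right (by positivity) (pow_le_one₀ (norm_nonneg _) (hv x))
  have hGsum : Summable G := summable_half_pow_succ.of_norm_bounded fun n ↦
    (ContinuousMap.norm_le _ (by positivity)).2 (hG_le n)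
  set h := ∑' n, G n
  have happly (x : X) : h x = ∑' n, G n x := (ContinuousMap.evalCLM ℂ x).map_tsum hGsum
  have hbound (x : X) (k : ℕ) : ‖h x‖ ≤ 1 - (1 / 2) ^ (k + 1) * (1 - ‖v x‖ ^ M k) := by
    rw [happly]
    calc ‖∑' n, G n x‖ ≤ ∑' n, ‖G n x‖ :=
          norm_tsum_le_tsum_norm (summable_half_pow_succ.of_nonneg_of_le (fun _ ↦ norm_nonneg _)
            (hG_le · x))
      _ = ∑' n, (1 / 2 : ℝ) ^ (n + 1) * ‖v x‖ ^ M n := by simp_rw [hG]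
      _ ≤ _ := tsum_half_pow_succ_mul_le (fun n ↦ by positivity)
            (fun n ↦ pow_le_one₀ (norm_nonneg _) (hv x)) k
  have hh_le (x : X) : ‖h x‖ ≤ 1 := (hbound x 0).trans <| by
    linarith [pow_le_one₀ (norm_nonneg (v x)) (hv x) (n := M 0)]
  refine ⟨h, tsum_mem hA fun n ↦ A.smul_mem (A.pow_mem hvA _) _, fun x hx ↦ ?_, hh_le, fun x ↦ ?_⟩
  · have hsum : ∑' n : ℕ, (1 / 2 : ℂ) ^ (n + 1) = 1 := by
      have := congrArg ((↑) : ℝ → ℂ) tsum_half_pow_succ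
      push_cast [Complex.ofReal_tsum] at this
      exact this
    simp only [happly, G, ContinuousMap.smul_apply, ContinuousMap.pow_apply, hx, one_pow,
      smul_eq_mul, mul_one, hsum]
  rcases le_or_gt (ρ x) 0 with hρx | hρx
  · exact mul_le_one₀ (hh_le x) (Real.exp_nonneg _) (Real.exp_le_one_iff.2 hρx)
  -- with `(1/2)^(n+3) < ρ x ≤ (1/2)^(n+2)`, the defect of the `n`-th term outweighs `exp (ρ x)`
  obtain ⟨n, hn₁, hn₂⟩ := exists_nat_pow_near_of_lt_one (x := 4 * ρ x) (by positivity)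
    (by linarith [hρ_le x]) (by norm_num : (0 : ℝ) < 1 / 2) (by norm_num)
  set s : ℝ := (1 / 2) ^ (n + 2)
  have hρs : ρ x ≤ s := by simp only [s, pow_add]; linarith
  have hMn := hM n x (show (1 / 2 : ℝ) ^ (n + 3) ≤ ρ x by rw [pow_add] at hn₁ ⊢; linarith)
  have hhs : ‖h x‖ ≤ 1 - s := (hbound x n).trans <| by
    simp only [s, pow_succ] at hMn ⊢; nlinarith [pow_pos (by norm_num : (0 : ℝ) < 1 / 2) n]
  calc ‖h x‖ * Real.exp (ρ x) ≤ (1 - s) * Real.exp s := by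
        gcongr
        linarith [norm_nonneg (h x)]
    _ ≤ 1 := one_sub_mul_exp_le_one s

lemma exists_mem_norm_le_one_of_re_lt (A : Subalgebra ℂ C(X, ℂ)) (hA : IsClosed (A : Set C(X, ℂ)))
    {f k : C(X, ℂ)} (hfA : f ∈ A) (hkA : k ∈ A) (hf : Ranπ f = {1}) {x₀ : X} (hx₀ : f x₀ = 1) :
    ∃ u ∈ A, (∀ x, ‖u x‖ ≤ 1) ∧ (∃ x₁, f x₁ = 1 ∧ ‖u x₁‖ = 1) ∧
      ∀ y, (k y).re < (k x₀).re → ‖u y‖ < 1 := by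
  obtain ⟨hf₁, -, -⟩ := ranπ_eq_singleton_one_iff.1 hf
  obtain ⟨x₁, hx₁, hmax⟩ := (isClosed_eq f.continuous continuous_const).isCompact.exists_isMaxOn
    ⟨x₀, hx₀⟩ (Complex.continuous_re.comp k.continuous).continuousOn
  set m := (k x₁).re
  have hm (x : X) (hx : f x = 1) : (k x).re ≤ m := hmax hx
  set t : ℝ := (8 * ‖k‖ + 1)⁻¹
  have ht : 0 < t := by positivity
  set w : C(X, ℂ) := (t : ℂ) • (k - (m : ℂ) • 1)
  have hwA : w ∈ A := A.smul_mem (A.sub_mem hkA (A.smul_mem A.one_mem _)) _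
  have hw (x : X) : (w x).re = t * ((k x).re - m) := by simp [w]
  have hw_le (x : X) : (w x).re ≤ 1 / 4 := by
    have hkx : (k x).re - m ≤ 2 * ‖k‖ := by
      linarith [Complex.re_le_norm (k x), (abs_le.1 (Complex.abs_re_le_norm (k x₁))).1,
        k.norm_coe_le_norm x, k.norm_coe_le_norm x₁]
    rw [hw, inv_mul_le_iff₀ (by positivity)]
    linarith
  set v : C(X, ℂ) := (2⁻¹ : ℂ) • (1 + f)
  have hv (x : X) : ‖v x‖ ≤ 1 := norm_half_mul_one_add_le_one (hf₁ x)
  have hvf (x : X) (hx : ‖v x‖ = 1) : f x = 1 := eq_one_of_norm_half_mul_one_add_eq_one (hf₁ x) hx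
  obtain ⟨h, hhA, hh₁, hh_le, hh_exp⟩ := exists_mem_norm_mul_exp_le_one A hA
    (A.smul_mem (A.add_mem A.one_mem hfA) _) hv (ρ := fun x ↦ (w x).re)
    (Complex.continuous_re.comp w.continuous) (fun x hx ↦ by
      rw [hw]; exact mul_nonpos_of_nonneg_of_nonpos ht.le (sub_nonpos.2 (hm x (hvf x hx)))) hw_le
  have hu (x : X) : ‖(h * NormedSpace.exp w) x‖ = ‖h x‖ * Real.exp (w x).re := by
    rw [ContinuousMap.mul_apply, norm_mul, NormedSpace.exp_continuousMap_apply, Complex.norm_exp]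
  refine ⟨h * NormedSpace.exp w, A.mul_mem hhA (NormedSpace.exp_mem hA hwA),
    fun x ↦ hu x ▸ hh_exp x, ⟨x₁, hx₁, ?_⟩, fun y hy ↦ ?_⟩
  · have : v x₁ = 1 := by simp [v, show f x₁ = 1 from hx₁]; norm_num
    rw [hu, hh₁ x₁ this, hw, sub_self, mul_zero, Real.exp_zero, norm_one, one_mul]
  · have hwy : (w y).re < 0 := by
      rw [hw]; exact mul_neg_of_pos_of_neg ht (by linarith [hm x₀ hx₀])
    rw [hu]
    calc ‖h y‖ * Real.exp (w y).re ≤ Real.exp (w y).re :=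
          mul_le_of_le_one_left (Real.exp_nonneg _) (hh_le y)
      _ < 1 := Real.exp_lt_one_iff.2 hwy

end Peaking

theorem stmt14_general {X : Type*} [TopologicalSpace X] [CompactSpace X]
    (A : Subalgebra ℂ C(X, ℂ)) (hA : IsClosed (A : Set C(X, ℂ)))
    (f g : A) (hf : Ranπ (f : C(X, ℂ)) = {1}) (hg : Ranπ (g : C(X, ℂ)) = {1}) :
    {x : X | (f : C(X, ℂ)) x = 1} ⊆ {x : X | (g : C(X, ℂ)) x = 1} ↔
      ∀ u : A, Ranπ (u : C(X, ℂ)) = {1} → (1 : ℂ) ∈ Ranπ ((f * u : A) : C(X, ℂ)) →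
        (1 : ℂ) ∈ Ranπ ((u * g : A) : C(X, ℂ)) := by
  refine ⟨fun hsub u hu hfu ↦ ?_, fun H x₀ hfx₀ ↦ ?_⟩
  · obtain ⟨x, hfx, hux⟩ := (one_mem_ranπ_mul_iff hf hu).1 hfu
    exact (one_mem_ranπ_mul_iff hu hg).2 ⟨x, hux, hsub hfx⟩
  by_contra hgx₀
  set k : C(X, ℂ) := ((g : C(X, ℂ)) x₀ - 1)⁻¹ • ((g : C(X, ℂ)) - 1)
  have hk (y : X) : k y = ((g : C(X, ℂ)) x₀ - 1)⁻¹ * ((g : C(X, ℂ)) y - 1) := rfl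
  obtain ⟨u, huA, hu, ⟨x₁, hfx₁, hux₁⟩, hu_lt⟩ := exists_mem_norm_le_one_of_re_lt A hA f.2
    (A.smul_mem (A.sub_mem g.2 A.one_mem) _) hf hfx₀ (k := k)
  obtain ⟨U, hUA, hU, hUx₁, hUu⟩ := exists_ranπ_eq_singleton_one_of_norm_le_one A huA hu hux₁
  obtain ⟨y, hUy, hgy⟩ := (one_mem_ranπ_mul_iff hU hg).1 <|
    H ⟨U, hUA⟩ hU ((one_mem_ranπ_mul_iff hf hU).2 ⟨x₁, hfx₁, hUx₁⟩)
  have hky : (k y).re < (k x₀).re := by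
    rw [hk, hk, hgy, sub_self, mul_zero, inv_mul_cancel₀ (sub_ne_zero.2 hgx₀)]
    norm_num
  exact (hu_lt y hky).ne (hUu y hUy)

theorem stmt14 {X : Type*} [TopologicalSpace X] [CompactSpace X] [T2Space X]
    (A : Subalgebra ℂ C(X, ℂ)) (hA : IsClosed (A : Set C(X, ℂ)))
    (hAsep : ∀ x y : X, x ≠ y → ∃ f ∈ A, f x ≠ f y)
    (f g : A) (hf : Ranπ (f : C(X, ℂ)) = {1}) (hg : Ranπ (g : C(X, ℂ)) = {1}) :
    {x : X | (f : C(X, ℂ)) x = 1} ⊆ {x : X | (g : C(X, ℂ)) x = 1} ↔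
      ∀ u : A, Ranπ (u : C(X, ℂ)) = {1} → (1 : ℂ) ∈ Ranπ ((f * u : A) : C(X, ℂ)) →
        (1 : ℂ) ∈ Ranπ ((u * g : A) : C(X, ℂ)) :=
  stmt14_general A hA f g hf hg
end

section
/- Let A be a unital semi-simple commutative Banach algebra and c ∈ ℂ. Suppose S : A → B is a surjective map onto a unital semi-simple commutative Banach algebra B satisfying σ(Sf·(Sg + c·1)) = σ(f·(g + c·1)) for all f, g ∈ A, fixing scalars, and satisfying Sf·(S(f⁻¹ − c)+c) = 1 for invertible f. If {f_m} is a sequence of invertible elements of A whose Gelfand transforms converge uniformly on M_A to a function f with 1/K < |f(x)| < K on M_A for some K > 0, then the Gelfand transforms of {Sf_m} form a uniformly Cauchy sequence on M_B whose limit is bounded between 1/K and K in modulus. -/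
/-!
Since `S` preserves spectra, every value of the Gelfand transform of `S fₙ` is a value of that of
`fₙ`, and the spectral identity applied to `fₘ` and `fₙ⁻¹ - c` gives, for every character `y` of
`B`, a character `x` of `A` with `Sfₘ(y) / Sfₙ(y) = fₘ(x) / fₙ(x)`. As the `fₙ` converge uniformly
to `f` with `1/K < |f| < K` on the compact space `M_A`, eventually `1/K < |fₙ| < K` on `M_A`, hence
`1/K < |Sfₙ| < K` on `M_B`, and the ratio identity yields `‖Sfₘ - Sfₙ‖ ≤ K² ‖fₘ - fₙ‖` for the
uniform norms of the Gelfand transforms.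
-/

open Filter Topology Set WeakDual

section UniformEstimates

variable {X Y : Type*} [TopologicalSpace X] [CompactSpace X] [TopologicalSpace Y] [CompactSpace Y]

theorem ContinuousMap.eventually_forall_norm_mem_Ioo {ι : Type*} {l : Filter ι}
    {g : ι → C(X, ℂ)} {f : C(X, ℂ)} {a b : ℝ} (hg : Tendsto g l (𝓝 f))
    (hf : ∀ x, ‖f x‖ ∈ Ioo a b) : ∀ᶠ i in l, ∀ x, ‖g i x‖ ∈ Ioo a b := by
  have hopen := ContinuousMap.eventually_mapsTo (K := univ) (U := norm ⁻¹' Ioo a b)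
    isCompact_univ (isOpen_Ioo.preimage continuous_norm) (fun x _ => hf x)
  filter_upwards [hg.eventually hopen] with i hi x using hi (mem_univ x)

theorem ContinuousMap.dist_le_sq_mul_dist_of_mul_eq_mul {g g' : C(X, ℂ)} {h h' : C(Y, ℂ)}
    {K : ℝ} (hK : 0 < K) (hg' : ∀ x, 1 / K ≤ ‖g' x‖) (hh' : ∀ y, ‖h' y‖ ≤ K)
    (hcross : ∀ y, ∃ x, h y * g' x = g x * h' y) : dist h h' ≤ K ^ 2 * dist g g' := by
  refine (ContinuousMap.dist_le (by positivity)).2 fun y => ?_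
  obtain ⟨x, hx⟩ := hcross y
  have hdiff : (h y - h' y) * g' x = (g x - g' x) * h' y := by linear_combination hx
  have hnorm : ‖h y - h' y‖ * ‖g' x‖ ≤ dist g g' * K := by
    rw [← norm_mul, hdiff, norm_mul, ← dist_eq_norm]
    exact mul_le_mul (ContinuousMap.dist_apply_le_dist x) (hh' y) (norm_nonneg _) dist_nonneg
  have hKg' : 1 ≤ K * ‖g' x‖ := (div_le_iff₀' hK).1 (hg' x)
  calc dist (h y) (h' y) = ‖h y - h' y‖ := dist_eq_norm _ _
    _ ≤ ‖h y - h' y‖ * (K * ‖g' x‖) := le_mul_of_one_le_right (norm_nonneg _) hKg'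
    _ = K * (‖h y - h' y‖ * ‖g' x‖) := by ring
    _ ≤ K * (dist g g' * K) := by gcongr
    _ = K ^ 2 * dist g g' := by ring

end UniformEstimates

theorem cauchySeq_of_eventually_dist_le_mul {α β : Type*} [PseudoMetricSpace α]
    [PseudoMetricSpace β] {u : ℕ → α} {v : ℕ → β} (hu : CauchySeq u) (C : ℝ)
    (hle : ∀ᶠ n in atTop, ∀ m, dist (v m) (v n) ≤ C * dist (u m) (u n)) : CauchySeq v := by
  have hle₂ : ∀ᶠ p : ℕ × ℕ in atTop, dist (v p.1) (v p.2) ≤ C * dist (u p.1) (u p.2) := by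
    rw [← prod_atTop_atTop_eq]
    exact (tendsto_snd.eventually hle).mono fun p hp => hp p.1
  rw [cauchySeq_iff_tendsto_dist_atTop_0] at hu ⊢
  exact squeeze_zero' (.of_forall fun _ => dist_nonneg) hle₂ (by simpa using hu.const_mul C)

theorem spectrum_apply_eq_of_spectrum_mul_add_smul_one {R A B : Type*} [CommRing R] [Ring A]
    [Algebra R A] [Ring B] [Algebra R B] {c : R} {S : A → B}
    (hSconst : ∀ lam : R, S (lam • 1) = lam • 1)
    (hSeq : ∀ f g : A, spectrum R (S f * (S g + c • 1)) = spectrum R (f * (g + c • 1)))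
    (a : A) : spectrum R (S a) = spectrum R a := by
  simpa only [hSconst, ← add_smul, sub_add_cancel, one_smul, mul_one] using hSeq a ((1 - c) • 1)

section Characters

variable {A B : Type*} [NormedCommRing A] [NormedAlgebra ℂ A] [CompleteSpace A]
  [NormedCommRing B] [NormedAlgebra ℂ B]

theorem WeakDual.CharacterSpace.exists_apply_eq_of_spectrum_subset {a : A} {b : B}
    (hab : spectrum ℂ b ⊆ spectrum ℂ a) (y : characterSpace ℂ B) :
    ∃ x : characterSpace ℂ A, y b = x a := by
  obtain ⟨x, hx⟩ := CharacterSpace.mem_spectrum_iff_exists.1 (hab (AlgHom.apply_mem_spectrum y b))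
  exact ⟨x, hx.symm⟩

theorem WeakDual.CharacterSpace.exists_apply_mul_eq_mul {c : ℂ} {S : A → B}
    (hSeq : ∀ f g : A, spectrum ℂ (S f * (S g + c • 1)) = spectrum ℂ (f * (g + c • 1)))
    (hSinv : ∀ f : Aˣ, S ↑f * (S (↑f⁻¹ - c • 1) + c • 1) = 1) (u v : Aˣ)
    (y : characterSpace ℂ B) : ∃ x : characterSpace ℂ A, y (S u) * x v = x u * y (S v) := by
  set w := S (↑v⁻¹ - c • 1) + c • 1
  have hspec : spectrum ℂ (S u * w) = spectrum ℂ (u * ↑v⁻¹ : A) := by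
    simpa only [sub_add_cancel] using hSeq u (↑v⁻¹ - c • 1)
  obtain ⟨x, hx⟩ := exists_apply_eq_of_spectrum_subset hspec.le y
  rw [map_mul, map_mul] at hx
  have hyv : y (S v) * y w = 1 := by rw [← map_mul, hSinv, map_one]
  have hxv : x v * x ↑v⁻¹ = 1 := by rw [← map_mul, Units.mul_inv, map_one]
  exact ⟨x, by linear_combination (x v * y (S v)) * hx - y (S u) * x v * hyv + x u * y (S v) * hxv⟩

end Characters

theorem stmt17_general {A B : Type*} [NormedCommRing A] [NormedAlgebra ℂ A] [CompleteSpace A]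
    [NormedCommRing B] [NormedAlgebra ℂ B] [CompleteSpace B]
    (c : ℂ) (S : A → B)
    (hSconst : ∀ lam : ℂ, S (lam • 1) = lam • 1)
    (hSeq : ∀ f g : A, spectrum ℂ (S f * (S g + c • 1)) = spectrum ℂ (f * (g + c • 1)))
    (hSinv : ∀ f : Aˣ, S ↑f * (S (↑f⁻¹ - c • 1) + c • 1) = 1)
    (fm : ℕ → Aˣ) (f : C(characterSpace ℂ A, ℂ)) (K : ℝ) (hK : 0 < K)
    (hbound : ∀ x : characterSpace ℂ A, 1 / K < ‖f x‖ ∧ ‖f x‖ < K)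
    (hconv : Filter.Tendsto (fun m => gelfandTransform ℂ A ((fm m : A)))
      Filter.atTop (nhds f)) :
    CauchySeq (fun m => gelfandTransform ℂ B (S (fm m : A))) ∧
      ∃ F : C(characterSpace ℂ B, ℂ),
        Filter.Tendsto (fun m => gelfandTransform ℂ B (S (fm m : A)))
          Filter.atTop (nhds F) ∧
        ∀ y : characterSpace ℂ B, 1 / K ≤ ‖F y‖ ∧ ‖F y‖ ≤ K := by
  set g := fun m => gelfandTransform ℂ A (fm m : A)
  set h := fun m => gelfandTransform ℂ B (S (fm m : A))
  have hgK : ∀ᶠ m in atTop, ∀ x, ‖g m x‖ ∈ Ioo (1 / K) K :=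
    ContinuousMap.eventually_forall_norm_mem_Ioo hconv hbound
  have hhK : ∀ᶠ m in atTop, ∀ y, ‖h m y‖ ∈ Ioo (1 / K) K := by
    filter_upwards [hgK] with m hm y
    obtain ⟨x, hx⟩ := CharacterSpace.exists_apply_eq_of_spectrum_subset
      (spectrum_apply_eq_of_spectrum_mul_add_smul_one hSconst hSeq (fm m : A)).le y
    exact hx ▸ hm x
  have hcauchy : CauchySeq h := by
    refine cauchySeq_of_eventually_dist_le_mul hconv.cauchySeq (K ^ 2) ?_
    filter_upwards [hgK, hhK] with n hgn hhn m
    exact ContinuousMap.dist_le_sq_mul_dist_of_mul_eq_mul hK (fun x => (hgn x).1.le)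
      (fun y => (hhn y).2.le) (CharacterSpace.exists_apply_mul_eq_mul hSeq hSinv (fm m) (fm n))
  obtain ⟨F, hF⟩ := cauchySeq_tendsto_of_complete hcauchy
  refine ⟨hcauchy, F, hF, fun y => ?_⟩
  have hFy : Tendsto (fun m => ‖h m y‖) atTop (𝓝 ‖F y‖) :=
    ((continuous_norm.comp (continuous_eval_const y)).tendsto F).comp hF
  exact isClosed_Icc.mem_of_tendsto hFy (hhK.mono fun m hm => Ioo_subset_Icc_self (hm y))

theorem stmt17 {A B : Type*} [NormedCommRing A] [NormedAlgebra ℂ A] [CompleteSpace A]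
    [NormedCommRing B] [NormedAlgebra ℂ B] [CompleteSpace B]
    (hAsemi : ∀ x : A, ∀ α : ℂ, spectrum ℂ x = {α} → x = algebraMap ℂ A α)
    (hBsemi : ∀ x : B, ∀ α : ℂ, spectrum ℂ x = {α} → x = algebraMap ℂ B α)
    (c : ℂ) (S : A → B) (hSsurj : Function.Surjective S)
    (hSconst : ∀ lam : ℂ, S (lam • 1) = lam • 1)
    (hSeq : ∀ f g : A, spectrum ℂ (S f * (S g + c • 1)) = spectrum ℂ (f * (g + c • 1)))
    (hSinv : ∀ f : Aˣ, S ↑f * (S (↑f⁻¹ - c • 1) + c • 1) = 1)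
    (fm : ℕ → Aˣ) (f : C(characterSpace ℂ A, ℂ)) (K : ℝ) (hK : 0 < K)
    (hbound : ∀ x : characterSpace ℂ A, 1 / K < ‖f x‖ ∧ ‖f x‖ < K)
    (hconv : Filter.Tendsto (fun m => gelfandTransform ℂ A ((fm m : A)))
      Filter.atTop (nhds f)) :
    CauchySeq (fun m => gelfandTransform ℂ B (S (fm m : A))) ∧
      ∃ F : C(characterSpace ℂ B, ℂ),
        Filter.Tendsto (fun m => gelfandTransform ℂ B (S (fm m : A)))
          Filter.atTop (nhds F) ∧
        ∀ y : characterSpace ℂ B, 1 / K ≤ ‖F y‖ ∧ ‖F y‖ ≤ K :=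
  stmt17_general c S hSconst hSeq hSinv fm f K hK hbound hconv
end

section
/- Let A be a unital semi-simple commutative Banach algebra, B a unital commutative Banach algebra, a ≠ b complex numbers, and p(z,w) = zw + az + bw + ab. If there is a surjective map T : A → B with σ(p(Tf, Tg)) = σ(p(f, g)) for all f, g ∈ A, then B is semi-simple. -/
open WeakDual

theorem stmt18 {A B : Type*} [NormedCommRing A] [NormedAlgebra ℂ A] [CompleteSpace A]
    [NormedCommRing B] [NormedAlgebra ℂ B] [CompleteSpace B]
    (hAsemi : ∀ x : A, (∀ φ : characterSpace ℂ A, φ x = 0) → x = 0)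
    (a b : ℂ) (hab : a ≠ b) (T : A → B) (hTsurj : Function.Surjective T)
    (hT : ∀ f g : A,
      spectrum ℂ (T f * T g + a • T f + b • T g + (a * b) • 1) =
        spectrum ℂ (f * g + a • f + b • g + (a * b) • 1)) :
    ∀ x : B, (∀ φ : characterSpace ℂ B, φ x = 0) → x = 0 := by
  -- key: if all characters of B vanish on x and T f = x - b•1, then f = -b•1
  have key : ∀ x : B, (∀ φ : characterSpace ℂ B, φ x = 0) →
      ∀ f : A, T f = x - b • 1 → f = - (b • 1) := by
    intro x hx f hf
    have hfb : f + b • 1 = 0 := by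
      apply hAsemi
      intro ψ
      by_contra hne
      have hg : ∀ g : A, ψ (g + a • 1) = 0 := by
        intro g
        have hmem : ψ (f + b • 1) * ψ (g + a • 1) ∈
            spectrum ℂ ((f + b • 1) * (g + a • 1)) := by
          rw [← map_mul]
          exact AlgHom.apply_mem_spectrum ψ _
        have hfac : (f + b • 1) * (g + a • 1) =
            f * g + a • f + b • g + (a * b) • 1 := by
          simp only [Algebra.smul_def, map_mul]
          ring
        have hfac' : (T f + b • 1) * (T g + a • 1) =
            T f * T g + a • T f + b • T g + (a * b) • 1 := by
          simp only [Algebra.smul_def, map_mul]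
          ring
        have hspec : spectrum ℂ ((f + b • 1) * (g + a • 1)) =
            spectrum ℂ (x * (T g + a • 1)) := by
          rw [hfac, ← hT f g, ← hfac', hf, sub_add_cancel]
        rw [hspec, CharacterSpace.mem_spectrum_iff_exists] at hmem
        obtain ⟨φ, hφ⟩ := hmem
        rw [map_mul, hx φ, zero_mul] at hφ
        rcases mul_eq_zero.mp hφ.symm with h | h
        · exact absurd h hne
        · exact h
      have h0 := hg 0
      have h1 := hg 1
      simp only [zero_add, map_smul, map_one, smul_eq_mul, mul_one] at h0
      simp only [map_add, map_smul, map_one, smul_eq_mul, mul_one, h0, add_zero] at h1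
      exact one_ne_zero h1
    exact eq_neg_of_add_eq_zero_left hfb
  -- T (-(b•1)) = -(b•1)
  obtain ⟨f₀, hf₀⟩ := hTsurj (0 - b • 1)
  have h₀ : T (-(b • (1:A))) = -(b • (1:B)) := by
    have := key 0 (fun φ => map_zero φ) f₀ hf₀
    rw [← this, hf₀, zero_sub]
  intro x hx
  obtain ⟨f, hf⟩ := hTsurj (x - b • 1)
  have hfeq := key x hx f hf
  rw [hfeq, h₀] at hf
  have := sub_eq_iff_eq_add.mp hf.symm
  rw [this, neg_add_cancel]
end

section
/- Let X and Y be compact Hausdorff spaces, a ∈ ℂ, and p(z,w) = zw + az + aw + a². Suppose T : C(X) → C(Y) is surjective and σ(p(Tf, Tg)) = σ(p(f, g)) for all f, g ∈ C(X). Then there exist a continuous function η : Y → {−1, 1} and a homeomorphism Φ : Y → X such that Tf(y) = η(y)·f(Φ(y)) + a·(η(y) − 1) for all f ∈ C(X) and y ∈ Y. -/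
/-!
Since `p(z, w) = (z + a)(w + a)`, the surjection `S f = T (f - a) + a` satisfies
`range (S f * S g) = range (f * g)`. Then `ε = S 1` satisfies `ε² = 1`, and `R = ε S` also fixes
`1`, so it preserves ranges, and sup norms of products.

Call `v` a bump at `y` if its values lie in `[0, 1]` and `v y = 1`. The peak sets `{g = 1}` of
preimages `g` of bumps at `y` are nonempty and closed. They form a directed family, because the
preimage of a product of bumps can only peak where each factor's preimage peaks (compare sup
norms against bumps). By compactness they share a point `Φ y`. Testing against bumps at `y` and
at `Φ y` shows that each of `R f y` and `f (Φ y)` lies on the segment from `0` to the other, so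
they coincide. `Φ` is then a continuous bijection between compact Hausdorff spaces.
-/

open Set Function unitInterval

section Segment

variable {E : Type*} [NormedAddCommGroup E] [NormedSpace ℝ E]

theorem segment_zero_eq_image (b : E) : segment ℝ 0 b = (fun t : ℝ => t • b) '' Icc 0 1 := by
  simp only [segment_eq_image', zero_add, sub_zero]

theorem norm_le_of_mem_segment_zero {a b : E} (ha : a ∈ segment ℝ 0 b) : ‖a‖ ≤ ‖b‖ := by
  simpa using segment_subset_closedBall_left 0 b ha

theorem eq_of_mem_segment_zero_of_norm_le {a b : E} (ha : a ∈ segment ℝ 0 b) (hab : ‖b‖ ≤ ‖a‖) :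
    a = b := by
  rw [segment_zero_eq_image] at ha
  obtain ⟨t, ⟨ht0, ht1⟩, rfl⟩ := ha
  rcases eq_or_ne b 0 with rfl | hb
  · simp
  rw [norm_smul, Real.norm_of_nonneg ht0] at hab
  have : t = 1 := le_antisymm ht1 (le_of_mul_le_mul_right (by simpa using hab) (norm_pos_iff.2 hb))
  simp [this]

end Segment

def IsBumpAt {Z : Type*} [TopologicalSpace Z] (v : C(Z, ℂ)) (z : Z) : Prop :=
  v z = 1 ∧ range v ⊆ segment ℝ 0 1

section Bump

variable {Z : Type*} [TopologicalSpace Z] {z : Z}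

theorem isBumpAt_one (z : Z) : IsBumpAt 1 z :=
  ⟨rfl, range_subset_iff.2 fun _ => right_mem_segment ℝ 0 1⟩

theorem IsBumpAt.exists_apply_eq {v : C(Z, ℂ)} (hv : IsBumpAt v z) (z' : Z) :
    ∃ t ∈ Icc (0 : ℝ) 1, (t : ℂ) = v z' := by
  simpa [segment_zero_eq_image] using hv.2 (mem_range_self z')

theorem IsBumpAt.norm_apply_le_one {v : C(Z, ℂ)} (hv : IsBumpAt v z) (z' : Z) : ‖v z'‖ ≤ 1 := by
  simpa using norm_le_of_mem_segment_zero (hv.2 (mem_range_self z'))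

theorem IsBumpAt.mul {v w : C(Z, ℂ)} (hv : IsBumpAt v z) (hw : IsBumpAt w z) :
    IsBumpAt (v * w) z := by
  refine ⟨by simp [hv.1, hw.1], range_subset_iff.2 fun z' => ?_⟩
  obtain ⟨s, hs, hsv⟩ := hv.exists_apply_eq z'
  obtain ⟨t, ht, htw⟩ := hw.exists_apply_eq z'
  rw [segment_zero_eq_image]
  exact ⟨s * t, ⟨mul_nonneg hs.1 ht.1, mul_le_one₀ hs.2 ht.1 ht.2⟩, by simp [← hsv, ← htw]⟩

variable [CompletelyRegularSpace Z]

theorem exists_isBumpAt {U : Set Z} (hU : IsOpen U) (hz : z ∈ U) :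
    ∃ v : C(Z, ℂ), IsBumpAt v z ∧ EqOn v 0 Uᶜ := by
  obtain ⟨f, hf, hfz, hfU⟩ := completelyRegularSpace_iff_isOpen.1 ‹_› z U hU hz
  refine ⟨⟨fun x => ((σ (f x) : ℝ) : ℂ), by fun_prop⟩, ⟨by simp [hfz], ?_⟩,
    fun x hx => by simp [hfU hx]⟩
  rintro _ ⟨x, rfl⟩
  rw [segment_zero_eq_image]
  exact ⟨σ (f x), (σ (f x)).2, by simp⟩

theorem mem_segment_of_forall_isBumpAt {u : C(Z, ℂ)} {w : ℂ}
    (h : ∀ v, IsBumpAt v z → w ∈ range (u * v)) : w ∈ segment ℝ 0 (u z) := by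
  have hclosed : IsClosed (segment ℝ 0 (u z)) := by
    rw [segment_zero_eq_image]
    exact (isCompact_Icc.image (by fun_prop)).isClosed
  rw [← hclosed.closure_eq, Metric.mem_closure_iff]
  intro ε hε
  obtain ⟨v, hv, hv0⟩ := exists_isBumpAt (z := z) (U := {z' | dist (u z') (u z) < ε})
    (isOpen_lt (by fun_prop) continuous_const) (by simpa using hε)
  obtain ⟨z', rfl⟩ := h v hv
  obtain ⟨t, ht, htv⟩ := hv.exists_apply_eq z'
  refine ⟨t • u z, by rw [segment_zero_eq_image]; exact mem_image_of_mem _ ht, ?_⟩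
  have hw : (u * v) z' = t • u z' := by simp [← htv, mul_comm]
  rw [hw, dist_smul₀, Real.norm_of_nonneg ht.1]
  by_cases hz' : dist (u z') (u z) < ε
  · exact (mul_le_of_le_one_left dist_nonneg ht.2).trans_lt hz'
  · have : (t : ℂ) = 0 := htv.trans (hv0 hz')
    simpa [Complex.ofReal_eq_zero.1 this] using hε

theorem le_norm_apply_of_forall_isBumpAt [CompactSpace Z] {u : C(Z, ℂ)} {r : ℝ}
    (h : ∀ v, IsBumpAt v z → r ≤ ‖u * v‖) : r ≤ ‖u z‖ := by
  by_contra! hlt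
  obtain ⟨c, hzc, hcr⟩ := exists_between hlt
  obtain ⟨v, hv, hv0⟩ := exists_isBumpAt (U := {z' | ‖u z'‖ < c})
    (isOpen_lt (by fun_prop) continuous_const) hzc
  have : ‖u * v‖ ≤ c := by
    refine (ContinuousMap.norm_le _ ((norm_nonneg _).trans hzc.le)).2 fun z' => ?_
    by_cases hz' : ‖u z'‖ < c
    · rw [ContinuousMap.mul_apply, norm_mul]
      exact (mul_le_of_le_one_right (norm_nonneg _) (hv.norm_apply_le_one z')).trans hz'.le
    · simp [hv0 hz', (norm_nonneg _).trans hzc.le]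
  linarith [h v hv]

end Bump

theorem ContinuousMap.norm_eq_of_range_eq {X Y E : Type*} [TopologicalSpace X] [CompactSpace X]
    [TopologicalSpace Y] [CompactSpace Y] [NormedAddCommGroup E] {u : C(Y, E)} {w : C(X, E)}
    (h : range u = range w) : ‖u‖ = ‖w‖ := by
  rw [norm_eq_iSup_norm, norm_eq_iSup_norm, ← iSup_range' (‖·‖) u, h, iSup_range']

theorem continuous_of_forall_continuous_comp {X Y : Type*} [TopologicalSpace X]
    [CompletelyRegularSpace X] [TopologicalSpace Y] {φ : Y → X}
    (h : ∀ f : C(X, ℂ), Continuous (f ∘ φ)) : Continuous φ := by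
  refine continuous_def.2 fun U hU => isOpen_iff_forall_mem_open.2 fun y hy => ?_
  obtain ⟨v, hv, hvU⟩ := exists_isBumpAt hU hy
  refine ⟨{y' | v (φ y') ≠ 0}, fun y' hy' => ?_, isOpen_ne_fun (h v) continuous_const,
    by simp [hv.1]⟩
  by_contra hy''
  exact hy' (hvU hy'')

def RangeMulPreserving {X Y : Type*} [TopologicalSpace X] [TopologicalSpace Y]
    (R : C(X, ℂ) → C(Y, ℂ)) : Prop :=
  ∀ f g, range (R f * R g) = range (f * g)

def LiftsBumps {X Y : Type*} [TopologicalSpace X] [TopologicalSpace Y]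
    (R : C(X, ℂ) → C(Y, ℂ)) (y : Y) (x : X) : Prop :=
  ∀ v, IsBumpAt v y → ∃ g, R g = v ∧ g x = 1

namespace RangeMulPreserving

variable {X Y : Type*} [TopologicalSpace X] [TopologicalSpace Y] {R : C(X, ℂ) → C(Y, ℂ)}

theorem norm_mul_eq [CompactSpace X] [CompactSpace Y] (hR : RangeMulPreserving R) (f g : C(X, ℂ)) : ‖R f * R g‖ = ‖f * g‖ :=
  ContinuousMap.norm_eq_of_range_eq (hR f g)

theorem range_eq (hR : RangeMulPreserving R) (h1 : R 1 = 1) (f : C(X, ℂ)) :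
    range (R f) = range f := by
  simpa [h1] using hR f 1

theorem apply_eq_one_of_norm_le [CompactSpace X] [CompletelyRegularSpace X] [CompactSpace Y]
    (hR : RangeMulPreserving R) (h1 : R 1 = 1) {g g' : C(X, ℂ)}
    (hle : ∀ y, ‖R g y‖ ≤ ‖R g' y‖) (hg' : range (R g') ⊆ segment ℝ 0 1) {x : X}
    (hx : g x = 1) : g' x = 1 := by
  have hnorm : ∀ h : C(X, ℂ), ‖R g * R h‖ ≤ ‖R g' * R h‖ := fun h =>
    (ContinuousMap.norm_le _ (norm_nonneg _)).2 fun y => by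
      refine le_trans ?_ ((R g' * R h).norm_coe_le_norm y)
      simp only [ContinuousMap.mul_apply, norm_mul]
      exact mul_le_mul_of_nonneg_right (hle y) (norm_nonneg _)
  have h1le : 1 ≤ ‖g' x‖ := le_norm_apply_of_forall_isBumpAt fun h hh => calc
    (1 : ℝ) = ‖(g * h) x‖ := by simp [hx, hh.1]
    _ ≤ ‖g * h‖ := (g * h).norm_coe_le_norm x
    _ = ‖R g * R h‖ := (hR.norm_mul_eq g h).symm
    _ ≤ ‖R g' * R h‖ := hnorm h
    _ = ‖g' * h‖ := hR.norm_mul_eq g' h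
  exact eq_of_mem_segment_zero_of_norm_le (hg' (hR.range_eq h1 g' ▸ mem_range_self x))
    (by simpa using h1le)

theorem exists_liftsBumps [CompactSpace X] [CompletelyRegularSpace X] [CompactSpace Y]
    (hR : RangeMulPreserving R) (hsurj : Surjective R) (h1 : R 1 = 1)
    (y : Y) : ∃ x, LiftsBumps R y x := by
  let ι := {v : C(Y, ℂ) // IsBumpAt v y}
  let G : ι → C(X, ℂ) := fun v => surjInv hsurj v.1
  have hG : ∀ v, R (G v) = v.1 := fun v => surjInv_eq hsurj v.1
  let peak : ι → Set X := fun v => {x | G v x = 1}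
  have hclosed : ∀ v, IsClosed (peak v) := fun v => isClosed_eq (G v).continuous continuous_const
  have hne : ∀ v, (peak v).Nonempty := fun v => by
    obtain ⟨x, hx⟩ : (1 : ℂ) ∈ range (G v) := by
      rw [← hR.range_eq h1, hG]
      exact ⟨y, v.2.1⟩
    exact ⟨x, hx⟩
  have hdir : Directed (· ⊇ ·) peak := fun v w => by
    refine ⟨⟨v.1 * w.1, v.2.mul w.2⟩, fun x hx => ?_, fun x hx => ?_⟩
    · refine hR.apply_eq_one_of_norm_le h1 (fun y' => ?_) (hG v ▸ v.2.2) hx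
      simpa [hG] using mul_le_of_le_one_right (norm_nonneg _) (w.2.norm_apply_le_one y')
    · refine hR.apply_eq_one_of_norm_le h1 (fun y' => ?_) (hG w ▸ w.2.2) hx
      simpa [hG] using mul_le_of_le_one_left (norm_nonneg _) (v.2.norm_apply_le_one y')
  have : Nonempty ι := ⟨⟨1, isBumpAt_one y⟩⟩
  obtain ⟨x, hx⟩ := IsCompact.nonempty_iInter_of_directed_nonempty_isCompact_isClosed peak hdir
    hne (fun v => (hclosed v).isCompact) hclosed
  exact ⟨x, fun v hv => ⟨G ⟨v, hv⟩, hG _, mem_iInter.1 hx ⟨v, hv⟩⟩⟩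

end RangeMulPreserving

namespace LiftsBumps

variable {X Y : Type*} [TopologicalSpace X] [TopologicalSpace Y] [CompletelyRegularSpace Y] {R : C(X, ℂ) → C(Y, ℂ)} {y : Y} {x : X}

theorem apply_mem_segment (hR : RangeMulPreserving R) (hyx : LiftsBumps R y x) (f : C(X, ℂ)) :
    f x ∈ segment ℝ 0 (R f y) :=
  mem_segment_of_forall_isBumpAt fun v hv => by
    obtain ⟨g, rfl, hgx⟩ := hyx v hv
    rw [hR f g]
    exact ⟨x, by simp [hgx]⟩

theorem apply_eq_one [CompletelyRegularSpace X] (hR : RangeMulPreserving R) (h1 : R 1 = 1) (hyx : LiftsBumps R y x)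
    {h : C(X, ℂ)} (hh : IsBumpAt h x) : R h y = 1 := by
  have hRh : R h y ∈ segment ℝ 0 1 := hh.2 (hR.range_eq h1 h ▸ mem_range_self y)
  refine (eq_of_mem_segment_zero_of_norm_le (hh.1 ▸ hyx.apply_mem_segment hR h) ?_).symm
  simpa using norm_le_of_mem_segment_zero hRh

theorem apply_eq [CompletelyRegularSpace X] (hR : RangeMulPreserving R) (h1 : R 1 = 1) (hyx : LiftsBumps R y x)
    (f : C(X, ℂ)) : R f y = f x := by
  have hmem : R f y ∈ segment ℝ 0 (f x) := mem_segment_of_forall_isBumpAt fun h hh => by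
    rw [← hR f h]
    exact ⟨y, by simp [hyx.apply_eq_one hR h1 hh]⟩
  exact eq_of_mem_segment_zero_of_norm_le hmem
    (norm_le_of_mem_segment_zero (hyx.apply_mem_segment hR f))

end LiftsBumps

namespace RangeMulPreserving

variable {X Y : Type*} [TopologicalSpace X] [CompactSpace X] [T2Space X]
  [TopologicalSpace Y] [CompactSpace Y] [T2Space Y] {R : C(X, ℂ) → C(Y, ℂ)}

theorem exists_homeomorph_of_map_one (hR : RangeMulPreserving R) (hsurj : Surjective R)
    (h1 : R 1 = 1) : ∃ Φ : Y ≃ₜ X, ∀ f y, R f y = f (Φ y) := by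
  choose φ hφ using hR.exists_liftsBumps hsurj h1
  have hRφ : ∀ f y, R f y = f (φ y) := fun f y => (hφ y).apply_eq hR h1 f
  have hcont : Continuous φ := continuous_of_forall_continuous_comp fun f => by
    simpa [comp_def, ← hRφ] using (R f).continuous
  have hinj : Injective φ := fun y y' hyy' => by
    by_contra hne
    obtain ⟨v, hv, hv0⟩ := exists_isBumpAt (isOpen_compl_singleton (x := y')) hne
    obtain ⟨f, rfl⟩ := hsurj v
    have : R f y' = 0 := hv0 (by simp)
    rw [hRφ, ← hyy', ← hRφ, hv.1] at this
    exact one_ne_zero this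
  have hsurjφ : Surjective φ := fun x => by
    by_contra! hx
    obtain ⟨h, hh, hh0⟩ := exists_isBumpAt (isCompact_range hcont).isClosed.isOpen_compl
      (by simpa using hx)
    obtain ⟨y, hy⟩ : (1 : ℂ) ∈ range (R h) := by
      rw [hR.range_eq h1]
      exact ⟨x, hh.1⟩
    rw [hRφ, hh0 (by simp)] at hy
    exact zero_ne_one hy
  exact ⟨hcont.homeoOfEquivCompactToT2 (f := Equiv.ofBijective φ ⟨hinj, hsurjφ⟩), hRφ⟩

theorem exists_eq_mul_comp (hR : RangeMulPreserving R) (hsurj : Surjective R) :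
    ∃ ε : C(Y, ℂ), (∀ y, ε y = 1 ∨ ε y = -1) ∧ ∃ Φ : Y ≃ₜ X, ∀ f y, R f y = ε y * f (Φ y) := by
  set ε := R 1
  have hε : ε * ε = 1 := by
    ext y
    obtain ⟨x, hx⟩ : (ε * ε) y ∈ range (1 * 1 : C(X, ℂ)) := hR 1 1 ▸ mem_range_self y
    simpa using hx.symm
  have hεR : RangeMulPreserving (fun f => ε * R f) := fun f g => by
    rw [← hR f g]
    congr 2
    linear_combination (R f * R g) * hε
  have hεsurj : Surjective (fun f => ε * R f) := fun u =>
    (hsurj (ε * u)).imp fun f hf => by simp [hf, ← mul_assoc, hε]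
  obtain ⟨Φ, hΦ⟩ := hεR.exists_homeomorph_of_map_one hεsurj hε
  have hεy : ∀ y, ε y * ε y = 1 := fun y => by simpa using congr($hε y)
  refine ⟨ε, fun y => mul_self_eq_one_iff.1 (hεy y), Φ, fun f y => ?_⟩
  rw [← hΦ f y, ContinuousMap.mul_apply, ← mul_assoc, hεy, one_mul]

end RangeMulPreserving

theorem mul_add_smul_add_smul_add_sq_smul_one {A : Type*} [CommRing A] [Algebra ℂ A] (a : ℂ)
    (u w : A) : u * w + a • u + a • w + a ^ 2 • 1 = (u + a • 1) * (w + a • 1) := by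
  simp only [Algebra.smul_def, map_pow, mul_one]
  ring

theorem stmt19 {X Y : Type*} [TopologicalSpace X] [CompactSpace X] [T2Space X]
    [TopologicalSpace Y] [CompactSpace Y] [T2Space Y]
    (a : ℂ) (T : C(X, ℂ) → C(Y, ℂ)) (hTsurj : Function.Surjective T)
    (hT : ∀ f g : C(X, ℂ),
      spectrum ℂ (T f * T g + a • T f + a • T g + (a ^ 2) • 1) =
        spectrum ℂ (f * g + a • f + a • g + (a ^ 2) • 1)) :
    ∃ (η : C(Y, ℂ)) (Φ : Y ≃ₜ X), (∀ y : Y, η y = 1 ∨ η y = -1) ∧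
      ∀ (f : C(X, ℂ)) (y : Y), T f y = η y * f (Φ y) + a * (η y - 1) := by
  set S : C(X, ℂ) → C(Y, ℂ) := fun f => T (f - a • 1) + a • 1 with hS
  have hSR : RangeMulPreserving S := fun f g => by
    have := hT (f - a • 1) (g - a • 1)
    simp only [mul_add_smul_add_smul_add_sq_smul_one, sub_add_cancel,
      ContinuousMap.spectrum_eq_range] at this
    exact this
  have hSsurj : Surjective S := fun u => by
    obtain ⟨f, hf⟩ := hTsurj (u - a • 1)
    exact ⟨f + a • 1, by simp [hS, hf]⟩
  obtain ⟨η, hη, Φ, hΦ⟩ := hSR.exists_eq_mul_comp hSsurj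
  refine ⟨η, Φ, hη, fun f y => ?_⟩
  have := hΦ (f + a • 1) y
  simp only [hS, add_sub_cancel_right, ContinuousMap.add_apply, ContinuousMap.smul_apply,
    ContinuousMap.one_apply, smul_eq_mul, mul_one] at this
  linear_combination this
end
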